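/- Let x₁, x₂, x₃ be positive real numbers, set x₁′ = (x₂² + x₃²)/x₁, and define, for i ≥ 1, Lᵢ = (x₃/x₂)·(x₁/x₂)^{i−1} if i is even and Lᵢ = (x₃/x₁)·(x₂/x₁)^{i−1} if i is odd. Define L₁′ = x₁′/x₂ and, for i ≥ 2, Lᵢ′ = L_{i−1}·(x₂/x₃) if i is even and Lᵢ′ = L_{i−1}·(x₃/x₂) if i is odd. Then the sequence of finite continued fractions [L₁′, L₂′, …, Lₙ′] converges, and its limit is β = (x₁′ + x₁ + √((x₁′ − x₁)² + 4x₃²)) / (2x₂); equivalently β = (x₃·α + x₁)/x₂, where α = ((x₁′ − x₁) + √((x₁′ − x₁)² + 4x₃²)) / (2x₃). -/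

import Mathlib

open Filter

noncomputable def cfVal : List ℝ → ℝ
  | [] => 0
  | [x] => x
  | x :: y :: t => x + (cfVal (y :: t))⁻¹

lemma cfVal_nil : cfVal [] = 0 := rfl
lemma cfVal_singleton (x : ℝ) : cfVal [x] = x := rfl
lemma cfVal_cons (x : ℝ) {l : List ℝ} (hl : l ≠ []) :
    cfVal (x :: l) = x + (cfVal l)⁻¹ := by
  match l, hl with
  | y :: t, _ => rfl

lemma cfVal_pos : ∀ (l : List ℝ), (∀ x ∈ l, 0 < x) → l ≠ [] → 0 < cfVal l
  | [], _, h => absurd rfl h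
  | [x], h, _ => by simpa [cfVal] using h x (by simp)
  | x :: y :: t, h, _ => by
    have hyt : 0 < cfVal (y :: t) :=
      cfVal_pos (y :: t) (fun z hz => h z (by simp at hz ⊢; tauto)) (by simp)
    have hx : 0 < x := h x (by simp)
    show 0 < x + (cfVal (y :: t))⁻¹
    positivity

section seq
variable {E c β : ℝ} {f : ℕ → ℝ}

lemma rec_markov (hf : ∀ n, f (n+2) = E * f (n+1) - f n)
    (hbase : f 2 * f 0 = f 1 ^ 2 + c) :
    ∀ n, f (n+2) * f n = f (n+1) ^ 2 + c := by
  intro n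
  induction n with
  | zero => exact hbase
  | succ n ih =>
    have e2 : f (n+3) = E * f (n+2) - f (n+1) := hf (n+1)
    have e1 : f (n+2) = E * f (n+1) - f n := hf n
    show f (n+3) * f (n+1) = f (n+2) ^ 2 + c
    linear_combination f (n+1) * e2 + ih - f (n+2) * e1

lemma rec_pos (hf : ∀ n, f (n+2) = E * f (n+1) - f n)
    (hbase : f 2 * f 0 = f 1 ^ 2 + c)
    (h0 : 0 < f 0) (h1 : 0 < f 1) (hc : 0 < c) : ∀ n, 0 < f n := by
  have key := rec_markov hf hbase
  intro n
  induction n using Nat.twoStepInduction with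
  | zero => exact h0
  | one => exact h1
  | more n ihn ihn1 =>
    have := key n
    nlinarith [sq_nonneg (f (n+1))]

lemma rec_mono_pos (hf : ∀ n, f (n+2) = E * f (n+1) - f n)
    (hE : 2 ≤ E) (h0 : 0 ≤ f 0) (h01 : f 0 < f 1) :
    ∀ n, 0 ≤ f n ∧ f n < f (n+1) := by
  intro n
  induction n with
  | zero => exact ⟨h0, h01⟩
  | succ n ih =>
    refine ⟨le_of_lt (lt_of_le_of_lt ih.1 ih.2), ?_⟩
    rw [hf n]
    nlinarith [ih.1, ih.2]

lemma rec_closed (hf : ∀ n, f (n+2) = E * f (n+1) - f n)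
    (hβ1 : 1 < β) (hβE : β + β⁻¹ = E) {A B : ℝ}
    (h0 : f 0 = A + B) (h1 : f 1 = A * β + B * β⁻¹) :
    ∀ n, f n = A * β ^ n + B * (β⁻¹) ^ n := by
  have hβ0 : β ≠ 0 := by positivity
  have hinv : β * β⁻¹ = 1 := mul_inv_cancel₀ hβ0
  intro n
  induction n using Nat.twoStepInduction with
  | zero => simpa using h0
  | one => simpa using h1
  | more n ihn ihn1 =>
    rw [hf n, ihn, ihn1, ← hβE]
    linear_combination (A * β ^ n + B * (β⁻¹) ^ n) * hinv

lemma rec_ratio_tendsto (hf : ∀ n, f (n+2) = E * f (n+1) - f n)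
    (hβ1 : 1 < β) (hβE : β + β⁻¹ = E) (hApos : 0 < f 1 - f 0 * β⁻¹) :
    Filter.Tendsto (fun n => f (n+1) / f n) atTop (nhds β) := by
  have hβ0 : β ≠ 0 := by positivity
  have hinvlt : β⁻¹ < 1 := by rw [inv_lt_one_iff₀]; right; exact hβ1
  have hinvpos : 0 < β⁻¹ := by positivity
  have hne : β - β⁻¹ ≠ 0 := by nlinarith
  have hsub : 0 < β - β⁻¹ := by nlinarith
  obtain ⟨A, hA⟩ : ∃ A : ℝ, A = (f 1 - f 0 * β⁻¹)/(β - β⁻¹) := ⟨_, rfl⟩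
  obtain ⟨B, hB⟩ : ∃ B : ℝ, B = f 0 - A := ⟨_, rfl⟩
  have hApos' : 0 < A := by rw [hA]; exact div_pos hApos hsub
  have hAval : A * (β - β⁻¹) = f 1 - f 0 * β⁻¹ := by
    rw [hA, div_mul_cancel₀ _ hne]
  have h0 : f 0 = A + B := by rw [hB]; ring
  have h1 : f 1 = A * β + B * β⁻¹ := by rw [hB]; linear_combination -hAval
  have hclosed := rec_closed hf hβ1 hβE h0 h1
  obtain ⟨r, hr⟩ : ∃ r : ℝ, r = β⁻¹ * β⁻¹ := ⟨_, rfl⟩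
  have hrpos : 0 < r := by rw [hr]; positivity
  have hrlt : |r| < 1 := by
    rw [abs_of_pos hrpos, hr]
    nlinarith
  have keyeq : ∀ n : ℕ, f (n+1) / f n = (A * β + B * β⁻¹ * r ^ n) / (A + B * r ^ n) := by
    intro n
    rw [hclosed n, hclosed (n+1)]
    have hβn : (β : ℝ) ^ n ≠ 0 := pow_ne_zero _ hβ0
    have e1 : r ^ n * β ^ n = (β⁻¹ : ℝ) ^ n := by
      rw [← mul_pow, hr, show β⁻¹ * β⁻¹ * β = β⁻¹ by field_simp]
    have e2 : A * β ^ (n+1) + B * β⁻¹ ^ (n+1) = (A * β + B * β⁻¹ * r ^ n) * β ^ n := by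
      rw [pow_succ, pow_succ, ← e1]; ring
    have e3 : A * β ^ n + B * β⁻¹ ^ n = (A + B * r ^ n) * β ^ n := by
      rw [← e1]; ring
    rw [e2, e3, mul_div_mul_right _ _ hβn]
  have hlim : Filter.Tendsto (fun n : ℕ => (A * β + B * β⁻¹ * r ^ n) / (A + B * r ^ n)) atTop (nhds β) := by
    have hr0 : Filter.Tendsto (fun n : ℕ => r ^ n) atTop (nhds 0) :=
      tendsto_pow_atTop_nhds_zero_of_abs_lt_one hrlt
    have hnum : Filter.Tendsto (fun n : ℕ => A * β + B * β⁻¹ * r ^ n) atTop (nhds (A * β)) := by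
      have := ((hr0.const_mul (B * β⁻¹)).const_add (A * β))
      simpa [mul_assoc] using this
    have hden : Filter.Tendsto (fun n : ℕ => A + B * r ^ n) atTop (nhds A) := by
      have := ((hr0.const_mul B).const_add A)
      simpa using this
    have hval : A * β / A = β := by
      rw [mul_comm, mul_div_assoc, div_self (ne_of_gt hApos'), mul_one]
    have h := hnum.div hden (ne_of_gt hApos')
    rw [hval] at h
    exact h
  exact hlim.congr (fun n => (keyeq n).symm)

end seq

lemma tendsto_of_even_odd {f : ℕ → ℝ} {l : ℝ}
    (he : Tendsto (fun k => f (2*k)) atTop (nhds l))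
    (ho : Tendsto (fun k => f (2*k+1)) atTop (nhds l)) :
    Tendsto f atTop (nhds l) := by
  rw [Metric.tendsto_atTop] at he ho ⊢
  intro ε hε
  obtain ⟨N1, hN1⟩ := he ε hε
  obtain ⟨N2, hN2⟩ := ho ε hε
  refine ⟨2 * (max N1 N2) + 2, fun n hn => ?_⟩
  rcases Nat.even_or_odd n with ⟨k, hk⟩ | ⟨k, hk⟩
  · have hk' : n = 2 * k := by omega
    rw [hk']
    exact hN1 k (by omega)
  · rw [hk]
    exact hN2 k (by omega)


lemma beta_gt_aux (x1 x2 x3 E β : ℝ) (h1 : 0 < x1) (h2 : 0 < x2) (h3 : 0 < x3)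
    (hEmul : E * (x1*x2) = x1^2+x2^2+x3^2) (hβ1 : 1 < β) (hβinv : β + β⁻¹ = E) :
    x1 < x2*β := by
  have hβpos : (0:ℝ) < β := lt_trans one_pos hβ1
  have hβmul : β * β⁻¹ = 1 := mul_inv_cancel₀ (ne_of_gt hβpos)
  have hβinvlt : β⁻¹ < 1 := by rw [inv_lt_one_iff₀]; right; exact hβ1
  have hkey2 : (x2*β - x1)*(x2*β⁻¹ - x1) = -x3^2 := by
    linear_combination x2^2*hβmul - x1*x2*hβinv - hEmul
  by_contra hcon
  push_neg at hcon
  have hblt : β⁻¹ < β := lt_trans hβinvlt hβ1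
  have hb : x2*β⁻¹ - x1 ≤ 0 := by
    have := mul_le_mul_of_nonneg_left hblt.le h2.le
    linarith
  have hnn : 0 ≤ (x2*β - x1)*(x2*β⁻¹ - x1) := by
    have ha : x2*β - x1 ≤ 0 := by linarith
    nlinarith [mul_nonneg (neg_nonneg.2 ha) (neg_nonneg.2 hb)]
  rw [hkey2] at hnn
  linarith [pow_pos h3 2]

noncomputable def mseq (E p q : ℝ) : ℕ → ℝ
  | 0 => p
  | 1 => q
  | n+2 => E * mseq E p q (n+1) - mseq E p q n

set_option maxHeartbeats 3200000 in
/-- With `x₁, x₂, x₃ > 0`, `x₁′ = (x₂² + x₃²)/x₁`,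
`Lᵢ` as in the straight snake graph of the once-punctured torus, and
`L₁′ = x₁′/x₂`, `Lᵢ′ = L_{i−1}·(x₂/x₃)` for even `i ≥ 2`, `Lᵢ′ = L_{i−1}·(x₃/x₂)` for odd
`i ≥ 2`, the sequence `[L₁′,…,Lₙ′]` converges to
`β = (x₁′ + x₁ + √((x₁′ − x₁)² + 4x₃²)) / (2x₂)`, and `β = (x₃·α + x₁)/x₂` where
`α = ((x₁′ − x₁) + √((x₁′ − x₁)² + 4x₃²)) / (2x₃)`. -/
theorem cf_L'_tendsto_beta (x1 x2 x3 : ℝ) (h1 : 0 < x1) (h2 : 0 < x2) (h3 : 0 < x3)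
    (L L' : ℕ → ℝ)
    (hL : ∀ i, 1 ≤ i → L i =
      if i % 2 = 0 then (x3 / x2) * (x1 / x2) ^ (i - 1)
      else (x3 / x1) * (x2 / x1) ^ (i - 1))
    (hL'1 : L' 1 = ((x2 ^ 2 + x3 ^ 2) / x1) / x2)
    (hL' : ∀ i, 2 ≤ i → L' i =
      if i % 2 = 0 then L (i - 1) * (x2 / x3) else L (i - 1) * (x3 / x2)) :
    Filter.Tendsto (fun n => cfVal ((List.range' 1 n).map L')) Filter.atTop
      (nhds (((x2 ^ 2 + x3 ^ 2) / x1 + x1 +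
        Real.sqrt (((x2 ^ 2 + x3 ^ 2) / x1 - x1) ^ 2 + 4 * x3 ^ 2)) / (2 * x2))) ∧
    ((x2 ^ 2 + x3 ^ 2) / x1 + x1 +
        Real.sqrt (((x2 ^ 2 + x3 ^ 2) / x1 - x1) ^ 2 + 4 * x3 ^ 2)) / (2 * x2) =
      (x3 * ((((x2 ^ 2 + x3 ^ 2) / x1 - x1) +
        Real.sqrt (((x2 ^ 2 + x3 ^ 2) / x1 - x1) ^ 2 + 4 * x3 ^ 2)) / (2 * x3)) + x1) /
        x2 := by
  have hx1 : x1 ≠ 0 := ne_of_gt h1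
  have hx2 : x2 ≠ 0 := ne_of_gt h2
  have hx3 : x3 ≠ 0 := ne_of_gt h3
  -- the trace parameter E
  obtain ⟨E, hE⟩ : ∃ E : ℝ, E = (x1^2+x2^2+x3^2)/(x1*x2) := ⟨_, rfl⟩
  have hEmul : E * (x1*x2) = x1^2+x2^2+x3^2 := by rw [hE]; field_simp
  have hE2 : 2 < E := by
    rw [hE, lt_div_iff₀ (by positivity)]
    nlinarith [sq_nonneg (x1-x2), sq_nonneg x3]
  -- sequences u, w, vv
  obtain ⟨u, hu0, hu1, hurec⟩ : ∃ u : ℕ → ℝ, u 0 = x1 ∧ u 1 = x2 ∧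
      ∀ n, u (n+2) = E * u (n+1) - u n := ⟨mseq E x1 x2, rfl, rfl, fun n => rfl⟩
  obtain ⟨w, hw⟩ : ∃ w : ℕ → ℝ, ∀ n, w n = x1 * u (n+1) - x2 * u n :=
    ⟨fun n => x1 * u (n+1) - x2 * u n, fun n => rfl⟩
  obtain ⟨vv, hvv⟩ : ∃ vv : ℕ → ℝ, ∀ n, vv n = x2 * w (n+1) - (E*x2 - x1) * w n :=
    ⟨fun n => x2 * w (n+1) - (E*x2 - x1) * w n, fun n => rfl⟩
  have hwrec : ∀ n, w (n+2) = E * w (n+1) - w n := by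
    intro n; rw [hw, hw, hw, hurec (n+1), hurec n]; ring
  have hvvrec : ∀ n, vv (n+2) = E * vv (n+1) - vv n := by
    intro n; rw [hvv, hvv, hvv, hwrec (n+1), hwrec n]; ring
  have hu2 : u 2 = E*x2 - x1 := by rw [hurec 0, hu0, hu1]
  have hw0 : w 0 = 0 := by rw [hw, hu1, hu0]; ring
  have hw1 : w 1 = x3^2 := by rw [hw, hu2, hu1]; linear_combination hEmul
  have hw2 : w 2 = E*x3^2 := by rw [hwrec 0, hw1, hw0]; ring
  have hvv0 : vv 0 = x2*x3^2 := by rw [hvv, hw1, hw0]; ring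
  have hvv1 : vv 1 = x1*x3^2 := by rw [hvv, hw2, hw1]; ring
  -- positivity
  have hupos : ∀ n, 0 < u n := by
    refine rec_pos (c := x3^2) hurec ?_ (by rw [hu0]; exact h1) (by rw [hu1]; exact h2)
      (by positivity)
    rw [hu2, hu0, hu1]; linear_combination hEmul
  have hwmono : ∀ n, 0 ≤ w n ∧ w n < w (n+1) :=
    rec_mono_pos hwrec hE2.le (by rw [hw0]) (by rw [hw0, hw1]; positivity)
  have hwpos : ∀ n, 0 < w (n+1) := fun n => lt_of_le_of_lt (hwmono n).1 (hwmono n).2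
  have hvvpos : ∀ n, 0 < vv n := by
    refine rec_pos (c := x3^6) hvvrec ?_ (by rw [hvv0]; positivity) (by rw [hvv1]; positivity)
      (by positivity)
    rw [hvvrec 0, hvv0, hvv1]; linear_combination x3^4 * hEmul
  -- explicit values of L'
  have hLv1 : L 1 = x3/x1 := by rw [hL 1 (by norm_num)]; norm_num
  have hLv2 : L 2 = (x3/x2)*(x1/x2) := by rw [hL 2 (by norm_num)]; norm_num
  have hL'2 : L' 2 = x2/x1 := by
    rw [hL' 2 le_rfl]; norm_num [hLv1]; field_simp
  have hL'3 : L' 3 = x3^2*x1/x2^3 := by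
    rw [hL' 3 (by norm_num)]; norm_num [hLv2]; field_simp
  -- scaling of L' under shift by two
  have hscale : ∀ j, 2 ≤ j →
      L' (j+2) = (if j % 2 = 0 then (x2/x1)^2 else (x1/x2)^2) * L' j := by
    intro j hj
    rcases Nat.mod_two_eq_zero_or_one j with hp | hp
    · have hj2 : (j+2) % 2 = 0 := by omega
      have hm1 : ¬((j+1) % 2 = 0) := by omega
      have hm2 : ¬((j-1) % 2 = 0) := by omega
      rw [if_pos hp, hL' (j+2) (by omega), hL' j hj, if_pos hj2, if_pos hp,
        show j+2-1 = j+1 from by omega, hL (j+1) (by omega), hL (j-1) (by omega),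
        if_neg hm1, if_neg hm2, show j+1-1 = (j-1-1)+2 from by omega, pow_add]
      ring
    · have hj2 : ¬((j+2) % 2 = 0) := by omega
      have hp' : ¬(j % 2 = 0) := by omega
      have hm1 : (j+1) % 2 = 0 := by omega
      have hm2 : (j-1) % 2 = 0 := by omega
      rw [if_neg hp', hL' (j+2) (by omega), hL' j hj, if_neg hj2, if_neg hp',
        show j+2-1 = j+1 from by omega, hL (j+1) (by omega), hL (j-1) (by omega),
        if_pos hm1, if_pos hm2, show j+1-1 = (j-1-1)+2 from by omega, pow_add]
      ring
  -- shift lemma for continued fractions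
  have hinvsq1 : ((x1/x2)^2)⁻¹ = (x2/x1)^2 := by rw [← inv_pow, inv_div]
  have hinvsq2 : ((x2/x1)^2)⁻¹ = (x1/x2)^2 := by rw [← inv_pow, inv_div]
  have hSgen : ∀ n j, 2 ≤ j → cfVal ((List.range' (j+2) n).map L') =
      (if j % 2 = 0 then (x2/x1)^2 else (x1/x2)^2) * cfVal ((List.range' j n).map L') := by
    intro n
    induction n with
    | zero => intro j hj; simp [cfVal]
    | succ n ih =>
      intro j hj
      rcases Nat.eq_zero_or_pos n with rfl | hn
      · have e1 : (List.range' (j+2) 1).map L' = [L' (j+2)] := rfl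
        have e2 : (List.range' j 1).map L' = [L' j] := rfl
        rw [e1, e2, cfVal_singleton, cfVal_singleton]
        exact hscale j hj
      · have hne1 : (List.range' (j+1+2) n).map L' ≠ [] := by
          simp [List.range'_eq_nil_iff]; omega
        have hne2 : (List.range' (j+1) n).map L' ≠ [] := by
          simp [List.range'_eq_nil_iff]; omega
        rw [List.range'_succ, List.map_cons, show j+2+1 = j+1+2 from by omega,
          cfVal_cons _ hne1, List.range'_succ (s := j), List.map_cons,
          cfVal_cons _ hne2, ih (j+1) (by omega), hscale j hj]
        rcases Nat.mod_two_eq_zero_or_one j with hp | hp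
        · rw [if_pos hp, if_neg (by omega : ¬((j+1) % 2 = 0)), mul_inv, hinvsq1]
          ring
        · rw [if_neg (by omega : ¬(j % 2 = 0)), if_pos (by omega : (j+1) % 2 = 0),
            mul_inv, hinvsq2]
          ring
  have hS2 : ∀ n, cfVal ((List.range' 4 n).map L') =
      (x2/x1)^2 * cfVal ((List.range' 2 n).map L') := by
    intro n
    have := hSgen n 2 le_rfl
    norm_num at this
    exact this

  -- one unfolding step of the continued fraction starting at index 2
  have hstep : ∀ m, 1 ≤ m → cfVal ((List.range' 2 (m+2)).map L') =
      L' 2 + (L' 3 + ((x2/x1)^2 * cfVal ((List.range' 2 m).map L'))⁻¹)⁻¹ := by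
    intro m hm
    have hne1 : (List.range' 3 (m+1)).map L' ≠ [] := by
      simp [List.range'_eq_nil_iff]
    have hne2 : (List.range' 4 m).map L' ≠ [] := by
      simp only [ne_eq, List.map_eq_nil_iff, List.range'_eq_nil_iff]
      omega
    rw [List.range'_succ, List.map_cons]
    simp only [Nat.reduceAdd]
    rw [cfVal_cons _ hne1, List.range'_succ, List.map_cons]
    simp only [Nat.reduceAdd]
    rw [cfVal_cons _ hne2, hS2 m]
  -- combination identity
  have hcomb : ∀ P Q : ℝ, 0 < P → 0 < Q →
      x2/x1 + (x3^2*x1/x2^3 + ((x2/x1)^2 * (x2*P/Q))⁻¹)⁻¹ =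
        (x2*((x3^2+x2^2)*P + x1*Q))/(x1*(x3^2*P + x1*Q)) := by
    intro P Q hP hQ
    have hP' : P ≠ 0 := ne_of_gt hP
    have hQ' : Q ≠ 0 := ne_of_gt hQ
    have hd1 : (x2:ℝ)^3 ≠ 0 := by positivity
    have hd2 : x2^3*P ≠ 0 := by positivity
    have hnum : x3^2*x1*(x2^3*P) + x2^3*(x1^2*Q) ≠ 0 := by
      have : (0:ℝ) < x3^2*x1*(x2^3*P) + x2^3*(x1^2*Q) := by
        have t1 : (0:ℝ) < x3^2*x1*(x2^3*P) :=
          mul_pos (by positivity) (mul_pos (by positivity) hP)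
        have t2 : (0:ℝ) < x2^3*(x1^2*Q) :=
          mul_pos (by positivity) (mul_pos (by positivity) hQ)
        linarith
      exact ne_of_gt this
    have hden2 : x1*(x3^2*P + x1*Q) ≠ 0 := by
      have t1 : (0:ℝ) < x3^2*P := mul_pos (by positivity) hP
      have t2 : (0:ℝ) < x1*Q := mul_pos h1 hQ
      have : (0:ℝ) < x1*(x3^2*P + x1*Q) := mul_pos h1 (by linarith)
      exact ne_of_gt this
    rw [show (x2/x1)^2 * (x2*P/Q) = (x2^3*P)/(x1^2*Q) from by field_simp,
        inv_div, div_add_div _ _ hd1 hd2, inv_div,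
        div_add_div _ _ hx1 hnum, div_eq_div_iff (by positivity) hden2]
    ring
  -- the closed formulas for the tails starting at index 2
  have hT : ∀ k, cfVal ((List.range' 2 (2*k+1)).map L') = x2 * w (k+1) / vv (k+1) ∧
      cfVal ((List.range' 2 (2*k+2)).map L') = x2 * u (k+2) / w (k+1) := by
    intro k
    induction k with
    | zero =>
      constructor
      · show cfVal ((List.range' 2 1).map L') = x2 * w 1 / vv 1
        have e : (List.range' 2 1).map L' = [L' 2] := rfl
        rw [e, cfVal_singleton, hL'2, hw1, hvv1,
          div_eq_div_iff hx1 (by positivity)]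
        ring
      · show cfVal ((List.range' 2 2).map L') = x2 * u 2 / w 1
        have e : (List.range' 2 2).map L' = [L' 2, L' 3] := rfl
        have e2 : cfVal [L' 2, L' 3] = L' 2 + (L' 3)⁻¹ := rfl
        rw [e, e2, hL'2, hL'3, hu2, hw1, hE]
        field_simp
        ring
    | succ k ih =>
      obtain ⟨ih1, ih2⟩ := ih
      have ew2 : w (k+2) = E * w (k+1) - w k := hwrec k
      have ew3 : w (k+3) = E * w (k+2) - w (k+1) := hwrec (k+1)
      have evv1 : vv (k+1) = x2 * w (k+2) - (E*x2 - x1) * w (k+1) := hvv (k+1)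
      have evv2 : vv (k+2) = x2 * w (k+3) - (E*x2 - x1) * w (k+2) := hvv (k+2)
      constructor
      · show cfVal ((List.range' 2 (2*k+3)).map L') = x2 * w (k+2) / vv (k+2)
        rw [show 2*k+3 = (2*k+1)+2 from by omega, hstep (2*k+1) (by omega), ih1,
          hL'2, hL'3, hcomb _ _ (hwpos k) (hvvpos (k+1)),
          div_eq_div_iff
            (ne_of_gt (mul_pos h1 (by
              have t1 : (0:ℝ) < x3^2 * w (k+1) := mul_pos (by positivity) (hwpos k)
              have t2 : (0:ℝ) < x1 * vv (k+1) := mul_pos h1 (hvvpos (k+1))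
              linarith)))
            (ne_of_gt (hvvpos (k+2)))]
        rw [evv2, evv1, ew3, ew2, hE]
        field_simp
        ring
      · show cfVal ((List.range' 2 (2*k+4)).map L') = x2 * u (k+3) / w (k+2)
        have ewu1 : w (k+1) = x1 * u (k+2) - x2 * u (k+1) := hw (k+1)
        have ewu2 : w (k+2) = x1 * u (k+3) - x2 * u (k+2) := hw (k+2)
        have eu3 : u (k+3) = E * u (k+2) - u (k+1) := hurec (k+1)
        rw [show 2*k+4 = (2*k+2)+2 from by omega, hstep (2*k+2) (by omega), ih2,
          hL'2, hL'3, hcomb _ _ (hupos (k+2)) (hwpos k),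
          div_eq_div_iff
            (ne_of_gt (mul_pos h1 (by
              have t1 : (0:ℝ) < x3^2 * u (k+2) := mul_pos (by positivity) (hupos (k+2))
              have t2 : (0:ℝ) < x1 * w (k+1) := mul_pos h1 (hwpos k)
              linarith)))
            (ne_of_gt (hwpos (k+1)))]
        rw [ewu2, ewu1, eu3, hE]
        field_simp
        ring
  -- unfolding the first entry
  have hf_unfold : ∀ n, 1 ≤ n → cfVal ((List.range' 1 (n+1)).map L') =
      L' 1 + (cfVal ((List.range' 2 n).map L'))⁻¹ := by
    intro n hn
    have hne : (List.range' 2 n).map L' ≠ [] := by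
      simp only [ne_eq, List.map_eq_nil_iff, List.range'_eq_nil_iff]
      omega
    rw [List.range'_succ, List.map_cons]
    simp only [Nat.reduceAdd]
    rw [cfVal_cons _ hne]
  have hL1E : L' 1 = (E*x2 - x1)/x2 := by
    rw [hL'1, hE]; field_simp; ring
  -- closed formulas for the convergents
  have hfodd : ∀ j, cfVal ((List.range' 1 (2*j+3)).map L') = u (j+3) / u (j+2) := by
    intro j
    have ewu1 : w (j+1) = x1 * u (j+2) - x2 * u (j+1) := hw (j+1)
    have eu3 : u (j+3) = E * u (j+2) - u (j+1) := hurec (j+1)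
    rw [show 2*j+3 = (2*j+2)+1 from by omega, hf_unfold (2*j+2) (by omega), (hT j).2,
      hL1E, inv_div, ewu1, eu3]
    have hu2' : u (j+2) ≠ 0 := ne_of_gt (hupos (j+2))
    field_simp
    ring
  have hfeven : ∀ j, cfVal ((List.range' 1 (2*j+2)).map L') = w (j+2) / w (j+1) := by
    intro j
    have evv1 : vv (j+1) = x2 * w (j+2) - (E*x2 - x1) * w (j+1) := hvv (j+1)
    rw [show 2*j+2 = (2*j+1)+1 from by omega, hf_unfold (2*j+1) (by omega), (hT j).1,
      hL1E, inv_div, evv1]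
    have hw1' : w (j+1) ≠ 0 := ne_of_gt (hwpos j)
    field_simp
    ring
  -- the limit β
  obtain ⟨s, hs⟩ : ∃ s : ℝ, s = Real.sqrt (E^2-4) := ⟨_, rfl⟩
  have hD : 0 < E^2-4 := by
    have h := mul_pos (show (0:ℝ) < E - 2 by linarith) (show (0:ℝ) < E + 2 by linarith)
    have e : (E-2)*(E+2) = E^2-4 := by ring
    linarith [e ▸ h]
  have hspos : 0 < s := by rw [hs]; exact Real.sqrt_pos.2 hD
  have hssq : s^2 = E^2-4 := by rw [hs]; exact Real.sq_sqrt hD.le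
  obtain ⟨β, hβ⟩ : ∃ β : ℝ, β = (E+s)/2 := ⟨_, rfl⟩
  have hβ1 : 1 < β := by rw [hβ]; linarith
  have hβpos : (0:ℝ) < β := lt_trans one_pos hβ1
  have hβquad : β^2 = E*β - 1 := by rw [hβ]; linear_combination hssq/4
  have hβinv : β + β⁻¹ = E := by
    have hβ0 : β ≠ 0 := ne_of_gt hβpos
    field_simp
    linear_combination hβquad
  have hβinvlt : β⁻¹ < 1 := by rw [inv_lt_one_iff₀]; right; exact hβ1
  have hβinvpos : 0 < β⁻¹ := by positivity
  have hβmul : β * β⁻¹ = 1 := mul_inv_cancel₀ (ne_of_gt hβpos)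
  have hx1x2β : x1 < x2*β := beta_gt_aux x1 x2 x3 E β h1 h2 h3 hEmul hβ1 hβinv
  have htendu : Tendsto (fun n => u (n+1)/u n) atTop (nhds β) := by
    apply rec_ratio_tendsto hurec hβ1 hβinv
    rw [hu0, hu1]
    have h := mul_pos (sub_pos.2 hx1x2β) hβinvpos
    have e : (x2*β - x1)*β⁻¹ = x2 - x1*β⁻¹ := by linear_combination x2*hβmul
    rw [e] at h
    exact h
  have htendw : Tendsto (fun n => w (n+1)/w n) atTop (nhds β) := by
    apply rec_ratio_tendsto hwrec hβ1 hβinv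
    rw [hw0, hw1]
    simpa using pow_pos h3 2
  have htarget : ((x2 ^ 2 + x3 ^ 2) / x1 + x1 +
      Real.sqrt (((x2 ^ 2 + x3 ^ 2) / x1 - x1) ^ 2 + 4 * x3 ^ 2)) / (2 * x2) = β := by
    have e1 : ((x2 ^ 2 + x3 ^ 2) / x1 - x1) ^ 2 + 4 * x3 ^ 2 = x2^2*(E^2-4) := by
      rw [hE]; field_simp; ring
    have e2 : Real.sqrt (((x2 ^ 2 + x3 ^ 2) / x1 - x1) ^ 2 + 4 * x3 ^ 2) = x2*s := by
      rw [e1, hs, Real.sqrt_mul (sq_nonneg x2), Real.sqrt_sq h2.le]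
    have e3 : (x2 ^ 2 + x3 ^ 2) / x1 + x1 = E*x2 := by rw [hE]; field_simp; ring
    rw [e2, e3, hβ]
    field_simp
  constructor
  · rw [htarget]
    apply tendsto_of_even_odd
    · refine Filter.Tendsto.congr' ?_ htendw
      filter_upwards [Filter.eventually_ge_atTop 1] with k hk
      obtain ⟨j, rfl⟩ : ∃ j, k = j+1 := ⟨k-1, by omega⟩
      rw [show 2*(j+1) = 2*j+2 from by omega, hfeven j]
    · have htendu1 : Tendsto (fun k => u (k+2)/u (k+1)) atTop (nhds β) :=
        htendu.comp (tendsto_add_atTop_nat 1)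
      refine Filter.Tendsto.congr' ?_ htendu1
      filter_upwards [Filter.eventually_ge_atTop 1] with k hk
      obtain ⟨j, rfl⟩ : ∃ j, k = j+1 := ⟨k-1, by omega⟩
      rw [show 2*(j+1)+1 = 2*j+3 from by omega, hfodd j]
  · field_simp
    ring
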